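/- Characterization of O_HD networks: Let G be a network. Then even_res(p,q) = odd_res(p,q) for every pair of vertices p ≠ q of G if and only if every harmonic function on G of finite energy is constant. -/

import Mathlib

open scoped ENNReal
open Filter

variable {V : Type*}

/-- A *flow* on a graph: an antisymmetric function on ordered pairs of vertices
that vanishes on non-adjacent pairs. -/
def IsFlow (G : SimpleGraph V) (θ : V → V → ℝ) : Prop :=
  (∀ u v, θ u v = -θ v u) ∧ ∀ u v, ¬G.Adj u v → θ u v = 0

/-- The divergence (source strength) of a flow at a vertex. -/
noncomputable def divg (G : SimpleGraph V) [G.LocallyFinite] (θ : V → V → ℝ) (v : V) : ℝ :=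
  ∑ u ∈ G.neighborFinset v, θ v u

/-- The energy `(1/2) ∑ r(u,v) θ(u,v)²` dissipated by a flow, valued in `[0,∞]`. -/
noncomputable def energy (r θ : V → V → ℝ) : ℝ≥0∞ :=
  2⁻¹ * ∑' p : V × V, ENNReal.ofReal (r p.1 p.2 * θ p.1 p.2 ^ 2)

open Classical in
/-- The source distribution with a unit source at `p` and a unit sink at `q`. -/
noncomputable def pointSource (p q v : V) : ℝ :=
  if v = p then 1 else if v = q then -1 else 0

/-- The odd resistance: the infimum of the energy over all finite-energy unit
flows from `p` to `q`. -/
noncomputable def oddRes (G : SimpleGraph V) [G.LocallyFinite] (r : V → V → ℝ)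
    (p q : V) : ℝ≥0∞ :=
  ⨅ (θ : V → V → ℝ) (_ : IsFlow G θ ∧ energy r θ ≠ ⊤ ∧ divg G θ = pointSource p q),
    energy r θ

/-- The cut resistance: the infimum of the energy over all unit flows from `p` to `q`
vanishing on every edge with an endpoint outside `S`. -/
noncomputable def cutRes (G : SimpleGraph V) [G.LocallyFinite] (r : V → V → ℝ)
    (p q : V) (S : Finset V) : ℝ≥0∞ :=
  ⨅ (θ : V → V → ℝ) (_ : IsFlow G θ ∧ divg G θ = pointSource p q ∧
      ∀ u v, (u ∉ S ∨ v ∉ S) → θ u v = 0), energy r θ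

/-- The even resistance: the infimum of the cut resistances over all finite
vertex sets containing `p` and `q`. -/
noncomputable def evenRes (G : SimpleGraph V) [G.LocallyFinite] (r : V → V → ℝ)
    (p q : V) : ℝ≥0∞ :=
  ⨅ (S : Finset V) (_ : p ∈ S ∧ q ∈ S), cutRes G r p q S

/-- The short resistance: the infimum of the energy over all antisymmetric edge
functions supported on edges with at least one endpoint in `S` whose divergence
at every vertex of `S` is that of a unit flow from `p` to `q`. -/
noncomputable def shortRes (G : SimpleGraph V) [G.LocallyFinite] (r : V → V → ℝ)
    (p q : V) (S : Finset V) : ℝ≥0∞ :=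
  ⨅ (θ : V → V → ℝ) (_ : (∀ u v, θ u v = -θ v u) ∧ (∀ u v, ¬G.Adj u v → θ u v = 0) ∧
      (∀ u v, u ∉ S → v ∉ S → θ u v = 0) ∧
      ∀ v ∈ S, divg G θ v = pointSource p q v), energy r θ

/-- A function on the vertices of a network is harmonic if the net current it
induces out of each vertex is zero. -/
def Harmonic (G : SimpleGraph V) [G.LocallyFinite] (r : V → V → ℝ) (u : V → ℝ) : Prop :=
  ∀ v, ∑ w ∈ G.neighborFinset v, (u v - u w) / r v w = 0

open Classical in
/-- The Dirichlet energy `(1/2) ∑ (u(v)-u(w))²/r(v,w)` of a function on the vertices. -/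
noncomputable def fnEnergy (G : SimpleGraph V) (r : V → V → ℝ) (u : V → ℝ) : ℝ≥0∞ :=
  2⁻¹ * ∑' p : V × V,
    if G.Adj p.1 p.2 then ENNReal.ofReal ((u p.1 - u p.2) ^ 2 / r p.1 p.2) else 0

/-!
Weighting the value of a flow on each oriented edge by `√(r/2)` embeds the flows of finite
energy into `ℓ²(V × V)`, with energy equal to the squared norm.

If `F` is a nonconstant harmonic function of finite energy, summation by parts shows that every
finitely supported unit flow from `p` to `q` pairs with the gradient of `F` to give
`F p - F q`. Subtracting the best multiple of this sourceless gradient lowers the energy of every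
such flow by `(F p - F q)² / E(F)` while keeping a finite-energy unit flow, so the even
resistance exceeds the odd one whenever `F p ≠ F q`.

Conversely, inside the closed space of finite-energy sourceless flows, a flow orthogonal to all
finitely supported sourceless flows is orthogonal to every cycle, hence is the gradient of a
potential, which is harmonic of finite energy. If such functions are constant, the finitely
supported sourceless flows are dense, so every finite-energy unit flow is an energy limit of
finitely supported ones (a path flow plus a finitely supported correction).
-/

open scoped RealInnerProductSpace

theorem norm_sub_inner_div_smul_sq {E : Type*} [NormedAddCommGroup E] [InnerProductSpace ℝ E]
    (f χ : E) :
    ‖f - (⟪f, χ⟫ / ‖χ‖ ^ 2) • χ‖ ^ 2 = ‖f‖ ^ 2 - ⟪f, χ⟫ ^ 2 / ‖χ‖ ^ 2 := by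
  rcases eq_or_ne χ 0 with rfl | hχ
  · simp
  have : ‖χ‖ ≠ 0 := norm_ne_zero_iff.2 hχ
  rw [norm_sub_sq_real, inner_smul_right, norm_smul, Real.norm_eq_abs, mul_pow, sq_abs]
  field_simp
  ring

namespace Network

variable {G : SimpleGraph V} {r θ η : V → V → ℝ} {S T : Finset V}

theorem _root_.IsFlow.add (hθ : IsFlow G θ) (hη : IsFlow G η) : IsFlow G (θ + η) :=
  ⟨fun u v => by simp [hθ.1 u v, hη.1 u v, add_comm],
    fun u v h => by simp [hθ.2 u v h, hη.2 u v h]⟩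

theorem _root_.IsFlow.smul (hθ : IsFlow G θ) (c : ℝ) : IsFlow G (c • θ) :=
  ⟨fun u v => by simp [hθ.1 u v], fun u v h => by simp [hθ.2 u v h]⟩

theorem _root_.IsFlow.sub (hθ : IsFlow G θ) (hη : IsFlow G η) : IsFlow G (θ - η) := by
  simpa [sub_eq_add_neg] using hθ.add (hη.smul (-1))

def VanishesOff (θ : V → V → ℝ) (S : Finset V) : Prop :=
  ∀ u v, (u ∉ S ∨ v ∉ S) → θ u v = 0

theorem VanishesOff.mono (hθ : VanishesOff θ S) (hST : S ⊆ T) :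
    VanishesOff θ T :=
  fun u v h => hθ u v (h.imp (mt (@hST u)) (mt (@hST v)))

theorem VanishesOff.add (hθ : VanishesOff θ S) (hη : VanishesOff η S) :
    VanishesOff (θ + η) S :=
  fun u v h => by simp [hθ u v h, hη u v h]

theorem VanishesOff.smul (hθ : VanishesOff θ S) (c : ℝ) :
    VanishesOff (c • θ) S :=
  fun u v h => by simp [hθ u v h]

theorem VanishesOff.sub (hθ : VanishesOff θ S) (hη : VanishesOff η S) :
    VanishesOff (θ - η) S :=
  fun u v h => by simp [hθ u v h, hη u v h]

theorem VanishesOff.eq_zero_of_notMem (hθ : VanishesOff θ S) {e : V × V}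
    (he : e ∉ S ×ˢ S) : θ e.1 e.2 = 0 :=
  hθ _ _ (by rwa [Finset.mem_product, not_and_or] at he)

section Sourceless

variable [G.LocallyFinite]

theorem divg_add : divg G (θ + η) = divg G θ + divg G η := by
  ext v; simp [divg, Finset.sum_add_distrib]

theorem divg_smul (c : ℝ) : divg G (c • θ) = c • divg G θ := by
  ext v; simp [divg, Finset.mul_sum]

theorem divg_sub : divg G (θ - η) = divg G θ - divg G η := by
  ext v; simp [divg, Finset.sum_sub_distrib]

variable (G) in
def sourcelessFlows : Submodule ℝ (V → V → ℝ) where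
  carrier := {θ | IsFlow G θ ∧ divg G θ = 0}
  add_mem' hθ hη := ⟨IsFlow.add hθ.1 hη.1, by rw [divg_add, hθ.2, hη.2, add_zero]⟩
  zero_mem' := ⟨⟨fun _ _ => by simp, fun _ _ _ => rfl⟩, by ext; simp [divg]⟩
  smul_mem' c _ hθ := ⟨IsFlow.smul hθ.1 c, by rw [divg_smul, hθ.2, smul_zero]⟩

theorem isClosed_sourcelessFlows : IsClosed (sourcelessFlows G : Set (V → V → ℝ)) := by
  have hanti : IsClosed {θ : V → V → ℝ | ∀ u v, θ u v = -θ v u} := by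
    simp only [Set.ofPred_forall]
    exact isClosed_iInter fun u => isClosed_iInter fun v => isClosed_eq (by fun_prop) (by fun_prop)
  have hedge : IsClosed {θ : V → V → ℝ | ∀ u v, ¬G.Adj u v → θ u v = 0} := by
    simp only [Set.ofPred_forall]
    exact isClosed_iInter fun u => isClosed_iInter fun v => isClosed_iInter fun _ =>
      isClosed_eq (by fun_prop) continuous_const
  have hdiv : IsClosed {θ : V → V → ℝ | divg G θ = 0} :=
    isClosed_eq (continuous_pi fun v => continuous_finsetSum _ fun u _ => by fun_prop)
      continuous_const
  exact (hanti.inter hedge).inter hdiv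

variable (G) in
def finSourcelessFlows : Submodule ℝ (V → V → ℝ) where
  carrier := {θ | θ ∈ sourcelessFlows G ∧ ∃ S, VanishesOff θ S}
  add_mem' := by
    classical
    exact fun ⟨hθ, S, hS⟩ ⟨hη, T, hT⟩ => ⟨add_mem hθ hη, S ∪ T,
      (hS.mono Finset.subset_union_left).add (hT.mono Finset.subset_union_right)⟩
  zero_mem' := ⟨zero_mem _, ∅, fun _ _ _ => rfl⟩
  smul_mem' c _ := fun ⟨hθ, S, hS⟩ => ⟨(sourcelessFlows G).smul_mem c hθ, S, hS.smul c⟩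

theorem finSourcelessFlows_le : finSourcelessFlows G ≤ sourcelessFlows G := fun _ h => h.1

end Sourceless

abbrev EdgeSpace (V : Type*) := lp (fun _ : V × V => ℝ) 2

noncomputable def coords (r θ : V → V → ℝ) (e : V × V) : ℝ :=
  √(r e.1 e.2 / 2) * θ e.1 e.2

variable (G r) in
open Classical in
noncomputable def ofCoords (f : V × V → ℝ) (u v : V) : ℝ :=
  if G.Adj u v then f (u, v) / √(r u v / 2) else 0

theorem coords_add : coords r (θ + η) = coords r θ + coords r η := by
  ext; simp [coords, mul_add]

theorem coords_smul (c : ℝ) : coords r (c • θ) = c • coords r θ := by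
  ext; simp [coords, mul_left_comm]

theorem coords_sub : coords r (θ - η) = coords r θ - coords r η := by
  ext; simp [coords, mul_sub]

theorem coords_mul_coords (hr : ∀ u v, G.Adj u v → 0 < r u v)
    (hθ : ∀ u v, ¬G.Adj u v → θ u v = 0) (e : V × V) :
    coords r θ e * coords r η e = r e.1 e.2 / 2 * θ e.1 e.2 * η e.1 e.2 := by
  by_cases h : G.Adj e.1 e.2
  · have hsq : √(r e.1 e.2 / 2) ^ 2 = r e.1 e.2 / 2 := Real.sq_sqrt (by linarith [hr _ _ h])
    rw [← hsq, coords, coords]; ring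
  · simp [coords, hθ _ _ h]

theorem energy_eq_tsum_coords_sq (hr : ∀ u v, G.Adj u v → 0 < r u v)
    (hθ : ∀ u v, ¬G.Adj u v → θ u v = 0) :
    energy r θ = ∑' e, ENNReal.ofReal (coords r θ e ^ 2) := by
  have h2 : ∀ e : V × V, r e.1 e.2 * θ e.1 e.2 ^ 2 = 2 * coords r θ e ^ 2 := fun e => by
    rw [sq (coords r θ e), coords_mul_coords hr hθ]; ring
  simp only [energy, h2, ENNReal.ofReal_mul zero_le_two, ENNReal.ofReal_ofNat,
    ENNReal.tsum_mul_left, ← mul_assoc, ENNReal.inv_mul_cancel two_ne_zero ENNReal.ofNat_ne_top,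
    one_mul]

theorem memℓp_coords (hr : ∀ u v, G.Adj u v → 0 < r u v)
    (hθ : ∀ u v, ¬G.Adj u v → θ u v = 0) (hfin : energy r θ ≠ ⊤) : Memℓp (coords r θ) 2 := by
  rw [energy_eq_tsum_coords_sq hr hθ] at hfin
  refine (memℓp_gen_iff (by norm_num)).2 ((ENNReal.summable_toReal hfin).congr fun e => ?_)
  simp [sq_nonneg]

theorem exists_coords_eq (hr : ∀ u v, G.Adj u v → 0 < r u v)
    (hθ : ∀ u v, ¬G.Adj u v → θ u v = 0) (hfin : energy r θ ≠ ⊤) :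
    ∃ f : EdgeSpace V, ⇑f = coords r θ :=
  ⟨⟨coords r θ, memℓp_coords hr hθ hfin⟩, rfl⟩

theorem inner_eq_tsum_of_coords (hr : ∀ u v, G.Adj u v → 0 < r u v)
    (hθ : ∀ u v, ¬G.Adj u v → θ u v = 0) {f g : EdgeSpace V}
    (hf : ⇑f = coords r θ) (hg : ⇑g = coords r η) :
    ⟪f, g⟫ = ∑' e : V × V, r e.1 e.2 / 2 * θ e.1 e.2 * η e.1 e.2 := by
  simp [lp.inner_eq_tsum, hf, hg, mul_comm (coords r η _), coords_mul_coords hr hθ]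

theorem energy_eq_norm_sq (hr : ∀ u v, G.Adj u v → 0 < r u v)
    (hθ : ∀ u v, ¬G.Adj u v → θ u v = 0) {f : EdgeSpace V} (hf : ⇑f = coords r θ) :
    energy r θ = ENNReal.ofReal (‖f‖ ^ 2) := by
  have hsum : Summable fun e => f e ^ 2 := by simpa [sq] using lp.summable_inner (𝕜 := ℝ) f f
  rw [energy_eq_tsum_coords_sq hr hθ, ← hf,
    ← ENNReal.ofReal_tsum_of_nonneg (fun _ => sq_nonneg _) hsum, ← real_inner_self_eq_norm_sq,
    lp.inner_eq_tsum]
  simp [sq]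

theorem energy_ne_top_of_vanishesOff (hθ : VanishesOff θ S) : energy r θ ≠ ⊤ := by
  rw [energy, tsum_eq_sum (s := S ×ˢ S) fun e he => by simp [hθ.eq_zero_of_notMem he]]
  exact ENNReal.mul_ne_top (by simp) (ENNReal.sum_ne_top.2 fun _ _ => ENNReal.ofReal_ne_top)

theorem coords_ofCoords (hr : ∀ u v, G.Adj u v → 0 < r u v) {f : V × V → ℝ}
    (hf : ∀ u v, ¬G.Adj u v → f (u, v) = 0) : coords r (ofCoords G r f) = f := by
  ext ⟨u, v⟩
  by_cases h : G.Adj u v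
  · have : √(r u v / 2) ≠ 0 := Real.sqrt_ne_zero'.2 (by linarith [hr u v h])
    simp only [coords, ofCoords, if_pos h]
    exact mul_div_cancel₀ _ this
  · simp [coords, ofCoords, h, hf u v h]

theorem ofCoords_coords (hr : ∀ u v, G.Adj u v → 0 < r u v)
    (hθ : ∀ u v, ¬G.Adj u v → θ u v = 0) : ofCoords G r (coords r θ) = θ := by
  ext u v
  by_cases h : G.Adj u v
  · have : √(r u v / 2) ≠ 0 := Real.sqrt_ne_zero'.2 (by linarith [hr u v h])
    simp only [coords, ofCoords, if_pos h]
    exact mul_div_cancel_left₀ _ this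
  · simp [ofCoords, h, hθ u v h]

theorem continuous_ofCoords : Continuous (ofCoords G r) := by
  refine continuous_pi fun u => continuous_pi fun v => ?_
  unfold ofCoords
  split_ifs <;> fun_prop

variable (r) in
def coordSubmodule (P : Submodule ℝ (V → V → ℝ)) : Submodule ℝ (EdgeSpace V) where
  carrier := {f | ∃ θ ∈ P, ⇑f = coords r θ}
  add_mem' := by
    rintro f g ⟨θ, hθ, hf⟩ ⟨η, hη, hg⟩
    exact ⟨θ + η, add_mem hθ hη, by rw [lp.coeFn_add, hf, hg, coords_add]⟩
  zero_mem' := ⟨0, zero_mem _, by ext; simp [coords]⟩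
  smul_mem' := by
    rintro c f ⟨θ, hθ, hf⟩
    exact ⟨c • θ, P.smul_mem c hθ, by rw [lp.coeFn_smul, hf, coords_smul]⟩

theorem coordSubmodule_mono {P Q : Submodule ℝ (V → V → ℝ)} (h : P ≤ Q) :
    coordSubmodule r P ≤ coordSubmodule r Q :=
  fun _ ⟨θ, hθ, hf⟩ => ⟨θ, h hθ, hf⟩

theorem isClosed_coordSubmodule (hr : ∀ u v, G.Adj u v → 0 < r u v)
    {P : Submodule ℝ (V → V → ℝ)} (hP : ∀ θ ∈ P, ∀ u v, ¬G.Adj u v → θ u v = 0)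
    (hPc : IsClosed (P : Set (V → V → ℝ))) :
    IsClosed (coordSubmodule r P : Set (EdgeSpace V)) := by
  have hcoe : Continuous fun f : EdgeSpace V => (f : V × V → ℝ) :=
    lp.uniformContinuous_coe.continuous
  have heq : (coordSubmodule r P : Set (EdgeSpace V)) =
      {f | ∀ u v, ¬G.Adj u v → f (u, v) = 0} ∩
        (fun f : EdgeSpace V => ofCoords G r f) ⁻¹' P := by
    ext f
    constructor
    · rintro ⟨θ, hθ, hf⟩
      refine ⟨fun u v h => by rw [hf, coords, hP θ hθ u v h, mul_zero], ?_⟩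
      simpa [hf, ofCoords_coords hr (hP θ hθ)]
    · rintro ⟨hf, hfP⟩
      exact ⟨_, hfP, (coords_ofCoords hr hf).symm⟩
  rw [heq]
  refine IsClosed.inter ?_ (hPc.preimage (continuous_ofCoords.comp hcoe))
  simp only [Set.ofPred_forall]
  exact isClosed_iInter fun u => isClosed_iInter fun v => isClosed_iInter fun _ =>
    isClosed_eq ((continuous_apply _).comp hcoe) continuous_const

section Walks

variable [DecidableEq V]

def edgeFlow (u v : V) : V → V → ℝ := fun x y =>
  (if x = u ∧ y = v then 1 else 0) - (if x = v ∧ y = u then 1 else 0)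

def walkFlow : {a b : V} → G.Walk a b → V → V → ℝ
  | _, _, .nil => 0
  | _, _, .cons (u := u) (v := v) _ W => edgeFlow u v + walkFlow W

theorem isFlow_edgeFlow {u v : V} (h : G.Adj u v) : IsFlow G (edgeFlow u v) := by
  refine ⟨fun x y => ?_, fun x y hxy => ?_⟩
  · simp only [edgeFlow]; split_ifs <;> grind
  · have := h.symm
    simp only [edgeFlow]; split_ifs <;> grind

theorem vanishesOff_edgeFlow {u v : V} (hu : u ∈ S) (hv : v ∈ S) :
    VanishesOff (edgeFlow u v) S := by
  intro x y hxy
  simp only [edgeFlow]; split_ifs <;> grind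

theorem divg_edgeFlow [G.LocallyFinite] {u v : V} (h : G.Adj u v) :
    divg G (edgeFlow u v) = Pi.single u 1 - Pi.single v 1 := by
  ext x
  simp only [divg, edgeFlow, Finset.sum_sub_distrib, ite_and, Pi.sub_apply, Pi.single_apply]
  split_ifs <;> subst_vars <;> simp_all [Finset.sum_ite_eq', G.adj_comm]

theorem isFlow_walkFlow {a b : V} (W : G.Walk a b) : IsFlow G (walkFlow W) := by
  induction W with
  | nil => exact ⟨fun _ _ => by simp [walkFlow], fun _ _ _ => rfl⟩
  | cons h W ih => exact (isFlow_edgeFlow h).add ih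

theorem divg_walkFlow [G.LocallyFinite] {a b : V} (W : G.Walk a b) :
    divg G (walkFlow W) = Pi.single a 1 - Pi.single b 1 := by
  induction W with
  | nil => ext; simp [walkFlow, divg]
  | cons h W ih => rw [walkFlow, divg_add, divg_edgeFlow h, ih]; abel

theorem vanishesOff_walkFlow {a b : V} (W : G.Walk a b) :
    VanishesOff (walkFlow W) W.support.toFinset := by
  induction W with
  | nil => exact fun _ _ _ => rfl
  | cons h W ih =>
    refine (vanishesOff_edgeFlow (by simp) (by simp)).add (ih.mono fun x => ?_)
    simp +contextual


theorem inner_coords_edgeFlow (hr : ∀ u v, G.Adj u v → 0 < r u v)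
    (hr_symm : ∀ u v, r u v = r v u) {ψ : V → V → ℝ} (hψ : IsFlow G ψ) {u v : V}
    (h : G.Adj u v) {f g : EdgeSpace V} (hf : ⇑f = coords r ψ)
    (hg : ⇑g = coords r (edgeFlow u v)) : ⟪f, g⟫ = r u v * ψ u v := by
  rw [inner_eq_tsum_of_coords hr hψ.2 hf hg, tsum_eq_sum (s := {(u, v), (v, u)}) fun e he => ?_,
    Finset.sum_pair (by simp [h.ne])]
  · simp [edgeFlow, h.ne, h.ne.symm, hψ.1 v u, hr_symm v u]
    ring
  · obtain ⟨x, y⟩ := e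
    simp only [Finset.mem_insert, Finset.mem_singleton, Prod.mk.injEq, not_or, not_and] at he
    have : edgeFlow u v x y = 0 := by simp only [edgeFlow]; split_ifs <;> simp_all
    simp [this]

theorem exists_coords_walkFlow (hr : ∀ u v, G.Adj u v → 0 < r u v) {a b : V}
    (W : G.Walk a b) : ∃ f : EdgeSpace V, ⇑f = coords r (walkFlow W) :=
  exists_coords_eq hr (isFlow_walkFlow W).2 (energy_ne_top_of_vanishesOff (vanishesOff_walkFlow W))

theorem divg_walkFlow_of_ne [G.LocallyFinite] {p q : V} (hpq : p ≠ q) (W : G.Walk p q) :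
    divg G (walkFlow W) = pointSource p q := by
  ext x
  rw [divg_walkFlow, pointSource]
  by_cases hp : x = p <;> by_cases hq : x = q <;> simp_all

theorem walkFlow_sub_walkFlow_mem [G.LocallyFinite] {a b : V} (W₁ W₂ : G.Walk a b) :
    walkFlow W₁ - walkFlow W₂ ∈ finSourcelessFlows G :=
  ⟨⟨(isFlow_walkFlow W₁).sub (isFlow_walkFlow W₂),
      by rw [divg_sub, divg_walkFlow, divg_walkFlow, sub_self]⟩,
    _, ((vanishesOff_walkFlow W₁).mono Finset.subset_union_left).sub
      ((vanishesOff_walkFlow W₂).mono Finset.subset_union_right)⟩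

end Walks

variable (G r) in
open Classical in
noncomputable def gradFlow (F : V → ℝ) (u v : V) : ℝ :=
  if G.Adj u v then (F u - F v) / r u v else 0

theorem isFlow_gradFlow (hr_symm : ∀ u v, r u v = r v u) (F : V → ℝ) :
    IsFlow G (gradFlow G r F) := by
  refine ⟨fun u v => ?_, fun u v h => by simp [gradFlow, h]⟩
  by_cases h : G.Adj u v
  · simp only [gradFlow, h, h.symm, if_true, hr_symm v u]; ring
  · simp [gradFlow, h, G.adj_comm]

theorem gradFlow_eq_zero {F : V → ℝ} (hF : ∀ v w, F v = F w) : gradFlow G r F = 0 := by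
  ext u v; simp [gradFlow, hF u v]

theorem eq_gradFlow_of_mul_eq_sub (hr : ∀ u v, G.Adj u v → 0 < r u v) {ψ : V → V → ℝ}
    (hψ : IsFlow G ψ) {F : V → ℝ} (hF : ∀ u v, G.Adj u v → r u v * ψ u v = F u - F v) :
    ψ = gradFlow G r F := by
  ext u v
  by_cases h : G.Adj u v
  · rw [gradFlow, if_pos h, ← hF u v h, mul_div_cancel_left₀ _ (hr u v h).ne']
  · rw [gradFlow, if_neg h, hψ.2 u v h]

theorem energy_gradFlow (F : V → ℝ) : energy r (gradFlow G r F) = fnEnergy G r F := by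
  unfold energy fnEnergy
  congr 1
  refine tsum_congr fun e => ?_
  by_cases h : G.Adj e.1 e.2
  · rw [gradFlow, if_pos h, if_pos h]
    rcases eq_or_ne (r e.1 e.2) 0 with h0 | h0
    · simp [h0]
    · congr 1; field_simp
  · simp [gradFlow, h]

theorem divg_gradFlow_eq_zero_iff [G.LocallyFinite] {F : V → ℝ} :
    divg G (gradFlow G r F) = 0 ↔ Harmonic G r F := by
  rw [funext_iff]
  refine forall_congr' fun v => ?_
  have hgrad : ∀ w ∈ G.neighborFinset v, gradFlow G r F v w = (F v - F w) / r v w :=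
    fun w hw => if_pos ((G.mem_neighborFinset v w).1 hw)
  rw [divg, Finset.sum_congr rfl hgrad, Pi.zero_apply]

section Green

variable [G.LocallyFinite]

theorem sum_eq_divg (hθ : IsFlow G θ) (hS : VanishesOff θ S) (x : V) :
    ∑ y ∈ S, θ x y = divg G θ x := by
  classical
  have hS' : ∀ y ∈ S ∪ G.neighborFinset x, y ∉ S → θ x y = 0 :=
    fun y _ hy => hS x y (Or.inr hy)
  have hN : ∀ y ∈ S ∪ G.neighborFinset x, y ∉ G.neighborFinset x → θ x y = 0 :=
    fun y _ hy => hθ.2 x y (by simpa using hy)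
  rw [divg, Finset.sum_subset Finset.subset_union_left hS',
    Finset.sum_subset Finset.subset_union_right hN]

theorem sum_sum_mul_sub_eq_two_mul_sum_divg (hθ : IsFlow G θ) (hS : VanishesOff θ S) (F : V → ℝ) :
    ∑ x ∈ S, ∑ y ∈ S, θ x y * (F x - F y) = 2 * ∑ x ∈ S, F x * divg G θ x := by
  have hrow : ∀ x ∈ S, ∑ y ∈ S, F x * θ x y = F x * divg G θ x := fun x hx => by
    rw [← Finset.mul_sum, sum_eq_divg hθ hS x]
  have hcol : ∑ x ∈ S, ∑ y ∈ S, θ x y * F y = -∑ y ∈ S, F y * divg G θ y := by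
    rw [Finset.sum_comm, ← Finset.sum_neg_distrib]
    refine Finset.sum_congr rfl fun y hy => ?_
    simp_rw [hθ.1 _ y, neg_mul, Finset.sum_neg_distrib, mul_comm _ (F y), hrow y hy]
  simp_rw [mul_sub, Finset.sum_sub_distrib, hcol, mul_comm (θ _ _), Finset.sum_congr rfl hrow]
  ring

theorem tsum_mul_gradFlow (hr : ∀ u v, G.Adj u v → 0 < r u v) (hθ : IsFlow G θ)
    (hS : VanishesOff θ S) (F : V → ℝ) :
    ∑' e : V × V, r e.1 e.2 / 2 * θ e.1 e.2 * gradFlow G r F e.1 e.2 =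
      ∑ x ∈ S, F x * divg G θ x := by
  have hterm : ∀ e : V × V, r e.1 e.2 / 2 * θ e.1 e.2 * gradFlow G r F e.1 e.2 =
      θ e.1 e.2 * (F e.1 - F e.2) / 2 := fun e => by
    by_cases h : G.Adj e.1 e.2
    · rw [gradFlow, if_pos h]; field_simp [(hr _ _ h).ne']
    · simp [hθ.2 _ _ h]
  rw [tsum_congr hterm, tsum_eq_sum fun e he => by simp [hS.eq_zero_of_notMem he],
    ← Finset.sum_div, Finset.sum_product, sum_sum_mul_sub_eq_two_mul_sum_divg hθ hS]
  ring

theorem sum_mul_pointSource {p q : V} (hpq : p ≠ q) (hp : p ∈ S) (hq : q ∈ S)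
    (F : V → ℝ) :
    ∑ x ∈ S, F x * pointSource p q x = F p - F q := by
  rw [Finset.sum_eq_add p q hpq (fun x _ hx => by simp [pointSource, hx.1, hx.2])
    (fun h => absurd hp h) (fun h => absurd hq h)]
  simp [pointSource, hpq.symm, sub_eq_add_neg]

end Green

variable [G.LocallyFinite]

theorem oddRes_le_evenRes {p q : V} : oddRes G r p q ≤ evenRes G r p q :=
  le_iInf₂ fun _ _ => le_iInf₂ fun θ ⟨hθ, hdiv, hS⟩ =>
    iInf₂_le θ ⟨hθ, energy_ne_top_of_vanishesOff hS, hdiv⟩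

theorem evenRes_le_energy {p q : V} (hθ : IsFlow G θ)
    (hdiv : divg G θ = pointSource p q) (hS : VanishesOff θ S) (hp : p ∈ S) (hq : q ∈ S) :
    evenRes G r p q ≤ energy r θ :=
  (iInf₂_le S ⟨hp, hq⟩).trans (iInf₂_le θ ⟨hθ, hdiv, hS⟩)


theorem inner_coords_gradFlow (hr : ∀ u v, G.Adj u v → 0 < r u v) {p q : V}
    (hpq : p ≠ q) (hp : p ∈ S) (hq : q ∈ S) (hθ : IsFlow G θ) (hS : VanishesOff θ S)
    (hdiv : divg G θ = pointSource p q) {F : V → ℝ} {f g : EdgeSpace V}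
    (hf : ⇑f = coords r θ) (hg : ⇑g = coords r (gradFlow G r F)) : ⟪f, g⟫ = F p - F q := by
  rw [inner_eq_tsum_of_coords hr hθ.2 hf hg, tsum_mul_gradFlow hr hθ hS, hdiv,
    sum_mul_pointSource hpq hp hq]

theorem oddRes_add_le_evenRes (hr : ∀ u v, G.Adj u v → 0 < r u v)
    (hr_symm : ∀ u v, r u v = r v u) {F : V → ℝ} (hF : Harmonic G r F) {χ : EdgeSpace V}
    (hχ : ⇑χ = coords r (gradFlow G r F)) {p q : V} (hpq : p ≠ q) :
    oddRes G r p q + ENNReal.ofReal ((F p - F q) ^ 2 / ‖χ‖ ^ 2) ≤ evenRes G r p q := by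
  refine le_iInf₂ fun S ⟨hp, hq⟩ => le_iInf₂ fun θ ⟨hθ, hdiv, hS⟩ => ?_
  obtain ⟨f, hf⟩ := exists_coords_eq hr hθ.2 (energy_ne_top_of_vanishesOff hS)
  have hinner : ⟪f, χ⟫ = F p - F q := inner_coords_gradFlow hr hpq hp hq hθ hS hdiv hf hχ
  set t := (F p - F q) / ‖χ‖ ^ 2 with ht
  set c := (F p - F q) ^ 2 / ‖χ‖ ^ 2
  -- `t` minimizes the energy of the unit flow `θ - t • gradFlow G r F`
  have hθ' : IsFlow G (θ - t • gradFlow G r F) := hθ.sub ((isFlow_gradFlow hr_symm F).smul t)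
  have hdiv' : divg G (θ - t • gradFlow G r F) = pointSource p q := by
    rw [divg_sub, divg_smul, divg_gradFlow_eq_zero_iff.2 hF, smul_zero, sub_zero, hdiv]
  have hf' : ⇑(f - t • χ) = coords r (θ - t • gradFlow G r F) := by
    rw [lp.coeFn_sub, lp.coeFn_smul, hf, hχ, coords_sub, coords_smul]
  have hnorm : ‖f - t • χ‖ ^ 2 = ‖f‖ ^ 2 - c := by
    rw [ht, ← hinner, norm_sub_inner_div_smul_sq, hinner]
  have hE' := energy_eq_norm_sq hr hθ'.2 hf'
  calc oddRes G r p q + ENNReal.ofReal c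
      ≤ energy r (θ - t • gradFlow G r F) + ENNReal.ofReal c :=
        add_le_add_left (iInf₂_le _ ⟨hθ', hE' ▸ ENNReal.ofReal_ne_top, hdiv'⟩) _
    _ = ENNReal.ofReal (‖f‖ ^ 2) := by
        rw [hE', hnorm, ← ENNReal.ofReal_add (hnorm ▸ sq_nonneg _)
          (div_nonneg (sq_nonneg _) (sq_nonneg _)), sub_add_cancel]
    _ = energy r θ := (energy_eq_norm_sq hr hθ.2 hf).symm


theorem evenRes_ne_oddRes (hG : G.Connected) (hr : ∀ u v, G.Adj u v → 0 < r u v)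
    (hr_symm : ∀ u v, r u v = r v u) {F : V → ℝ} (hF : Harmonic G r F)
    (hfin : fnEnergy G r F ≠ ⊤) {p q : V} (hFpq : F p ≠ F q) :
    evenRes G r p q ≠ oddRes G r p q := by
  classical
  have hpq : p ≠ q := fun h => hFpq (congrArg F h)
  obtain ⟨χ, hχ⟩ :=
    exists_coords_eq hr (isFlow_gradFlow hr_symm F).2 (energy_gradFlow F ▸ hfin)
  let W := (hG.preconnected p q).some
  have hW := vanishesOff_walkFlow W
  obtain ⟨f, hf⟩ := exists_coords_walkFlow hr W
  have hinner : ⟪f, χ⟫ = F p - F q := inner_coords_gradFlow hr hpq (by simp) (by simp)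
    (isFlow_walkFlow W) hW (divg_walkFlow_of_ne hpq W) hf hχ
  have hχ0 : χ ≠ 0 := by
    rintro rfl
    exact hFpq (sub_eq_zero.1 (by simpa using hinner.symm))
  have hgap : 0 < (F p - F q) ^ 2 / ‖χ‖ ^ 2 := by
    have := sub_ne_zero.2 hFpq
    positivity
  have hodd : oddRes G r p q ≠ ⊤ :=
    ne_top_of_le_ne_top (energy_ne_top_of_vanishesOff hW) (iInf₂_le _
      ⟨isFlow_walkFlow W, energy_ne_top_of_vanishesOff hW, divg_walkFlow_of_ne hpq W⟩)
  intro heq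
  have hle := oddRes_add_le_evenRes hr hr_symm hF hχ hpq
  rw [heq] at hle
  exact (ENNReal.lt_add_right hodd (ENNReal.ofReal_pos.2 hgap).ne').not_ge hle

theorem exists_eq_gradFlow_of_orthogonal (hG : G.Connected) (hr : ∀ u v, G.Adj u v → 0 < r u v)
    (hr_symm : ∀ u v, r u v = r v u) {ψ : V → V → ℝ} (hψ : IsFlow G ψ) {χ : EdgeSpace V}
    (hχ : ⇑χ = coords r ψ)
    (horth : ∀ g ∈ coordSubmodule r (finSourcelessFlows G), ⟪χ, g⟫ = 0) :
    ∃ F : V → ℝ, ψ = gradFlow G r F := by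
  classical
  obtain ⟨b⟩ := hG.nonempty
  choose walkVec hwalkVec using fun v => exists_coords_walkFlow hr (hG.preconnected v b).some
  -- the potential of `v` is the voltage drop `∑ r ψ` along a fixed walk from `v` to `b`
  refine ⟨fun v => ⟪χ, walkVec v⟫, eq_gradFlow_of_mul_eq_sub hr hψ fun u v h => ?_⟩
  obtain ⟨g, hg⟩ := exists_coords_eq hr (isFlow_edgeFlow h).2
    (energy_ne_top_of_vanishesOff (vanishesOff_edgeFlow (S := {u, v}) (by simp) (by simp)))
  have hmem : g + walkVec v - walkVec u ∈ coordSubmodule r (finSourcelessFlows G) :=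
    ⟨_, walkFlow_sub_walkFlow_mem (.cons h (hG.preconnected v b).some) (hG.preconnected u b).some,
      by rw [lp.coeFn_sub, lp.coeFn_add, hg, hwalkVec, hwalkVec, ← coords_add, ← coords_sub]
         rfl⟩
  have h0 := horth _ hmem
  rw [inner_sub_right, inner_add_right, inner_coords_edgeFlow hr hr_symm hψ h hχ hg] at h0
  linarith


theorem coordSubmodule_sourcelessFlows_le_topologicalClosure (hG : G.Connected)
    (hr : ∀ u v, G.Adj u v → 0 < r u v) (hr_symm : ∀ u v, r u v = r v u)
    (hH : ∀ F : V → ℝ, Harmonic G r F → fnEnergy G r F ≠ ⊤ → ∀ v w, F v = F w) :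
    coordSubmodule r (sourcelessFlows G) ≤
      (coordSubmodule r (finSourcelessFlows G)).topologicalClosure := by
  intro x hx
  set L := coordSubmodule r (finSourcelessFlows G)
  set K := L.topologicalClosure
  have hK : K ≤ coordSubmodule r (sourcelessFlows G) :=
    Submodule.topologicalClosure_minimal _ (coordSubmodule_mono finSourcelessFlows_le)
      (isClosed_coordSubmodule hr (fun _ hθ => hθ.1.2) isClosed_sourcelessFlows)
  obtain ⟨ψ, hψ, hχ⟩ := sub_mem hx (hK (K.starProjection_apply_mem x))
  obtain ⟨F, rfl⟩ := exists_eq_gradFlow_of_orthogonal hG hr hr_symm hψ.1 hχ fun g hg =>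
    Submodule.inner_left_of_mem_orthogonal (L.le_topologicalClosure hg)
      (K.sub_starProjection_mem_orthogonal x)
  have hF := hH F (divg_gradFlow_eq_zero_iff.1 hψ.2)
    (by rw [← energy_gradFlow, energy_eq_norm_sq hr hψ.1.2 hχ]; exact ENNReal.ofReal_ne_top)
  have hx0 : x - K.starProjection x = 0 := by
    ext e
    simp [hχ, gradFlow_eq_zero hF, coords]
  rw [sub_eq_zero.1 hx0]
  exact K.starProjection_apply_mem x

theorem evenRes_le_oddRes (hG : G.Connected) (hr : ∀ u v, G.Adj u v → 0 < r u v)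
    (hr_symm : ∀ u v, r u v = r v u)
    (hH : ∀ F : V → ℝ, Harmonic G r F → fnEnergy G r F ≠ ⊤ → ∀ v w, F v = F w)
    {p q : V} (hpq : p ≠ q) : evenRes G r p q ≤ oddRes G r p q := by
  classical
  refine le_iInf₂ fun θ ⟨hθ, hfin, hdiv⟩ => ?_
  let W := (hG.preconnected p q).some
  obtain ⟨f, hf⟩ := exists_coords_eq hr hθ.2 hfin
  obtain ⟨f₀, hf₀⟩ := exists_coords_walkFlow hr W
  -- `f₀ + g` represents the finitely supported unit flow `walkFlow W + ζ`
  have hfin_le : ∀ g ∈ coordSubmodule r (finSourcelessFlows G),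
      evenRes G r p q ≤ ENNReal.ofReal (‖f₀ + g‖ ^ 2) := by
    rintro g ⟨ζ, ⟨⟨hζ, hdivζ⟩, S, hS⟩, hg⟩
    have hflow : IsFlow G (walkFlow W + ζ) := (isFlow_walkFlow W).add hζ
    rw [← energy_eq_norm_sq hr hflow.2 (by rw [lp.coeFn_add, hf₀, hg, coords_add])]
    exact evenRes_le_energy hflow (by rw [divg_add, hdivζ, add_zero, divg_walkFlow_of_ne hpq])
      (((vanishesOff_walkFlow W).mono Finset.subset_union_left).add
        (hS.mono Finset.subset_union_right))
      (Finset.mem_union_left _ (by simp)) (Finset.mem_union_left _ (by simp))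
  have hclosed :
      IsClosed {g : EdgeSpace V | evenRes G r p q ≤ ENNReal.ofReal (‖f₀ + g‖ ^ 2)} :=
    isClosed_le continuous_const (ENNReal.continuous_ofReal.comp (by fun_prop))
  have hsrc : f - f₀ ∈ coordSubmodule r (sourcelessFlows G) :=
    ⟨θ - walkFlow W, ⟨hθ.sub (isFlow_walkFlow W),
      by rw [divg_sub, hdiv, divg_walkFlow_of_ne hpq, sub_self]⟩,
      by rw [lp.coeFn_sub, hf, hf₀, coords_sub]⟩
  have hle : evenRes G r p q ≤ ENNReal.ofReal (‖f₀ + (f - f₀)‖ ^ 2) :=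
    closure_minimal hfin_le hclosed
      (coordSubmodule_sourcelessFlows_le_topologicalClosure hG hr hr_symm hH hsrc)
  rwa [add_sub_cancel, ← energy_eq_norm_sq hr hθ.2 hf] at hle

end Network

/-- **Characterization of `O_HD` networks**: all even and odd resistances agree iff every
finite-energy harmonic function is constant. -/
theorem OHD_characterization
    (G : SimpleGraph V) [G.LocallyFinite] (hG : G.Connected)
    (r : V → V → ℝ) (hr_pos : ∀ u v, G.Adj u v → 0 < r u v)
    (hr_symm : ∀ u v, r u v = r v u) :
    (∀ p q : V, p ≠ q → evenRes G r p q = oddRes G r p q) ↔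
      ∀ u : V → ℝ, Harmonic G r u → fnEnergy G r u ≠ ⊤ → ∀ v w, u v = u w := by
  refine ⟨fun h F hF hfin v w => ?_, fun hH p q hpq =>
    le_antisymm (Network.evenRes_le_oddRes hG hr_pos hr_symm hH hpq) Network.oddRes_le_evenRes⟩
  by_contra hne
  exact Network.evenRes_ne_oddRes hG hr_pos hr_symm hF hfin hne
    (h v w fun hvw => hne (congrArg F hvw))
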